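/- Let G = (V,E) be a simple graph with rank-inequality matrix B, and let g be a vector over E. If there exists a nonzero uniform-sign vector z with supp(z) ⊆ supp(g) such that y = g − z satisfies supp(y) ⊊ supp(g) and supp(By) ⊊ supp(Bg), then there exists a single edge f ∈ supp(g) lying in no balanced set with respect to g; consequently dropping f alone reduces the support with respect to B. -/

import Mathlib

/-- The row of the rank-inequality matrix indexed by `U ⊆ V`, applied to `g`:
`∑_{e ∈ E(G[U])} g(e)`. -/
def rowSum {V : Type*} [Fintype V] [DecidableEq V] (G : SimpleGraph V) [DecidableRel G.Adj]
    (g : G.edgeSet → ℝ) (U : Finset V) : ℝ :=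
  ∑ e : G.edgeSet, if ∀ v ∈ (e : Sym2 V), v ∈ U then g e else 0

/-- The support of `B g` for the rank-inequality matrix `B`: the nonempty sets `U` whose
rank row evaluates to a nonzero value on `g`. -/
def Bsupp {V : Type*} [Fintype V] [DecidableEq V] (G : SimpleGraph V) [DecidableRel G.Adj]
    (g : G.edgeSet → ℝ) : Set (Finset V) :=
  {U | U.Nonempty ∧ rowSum G g U ≠ 0}

/-- A circuit of the rank-inequality system: a nonzero vector `g` such that `B g` is
support-minimal over `{B x : x ≠ 0}`. -/
def IsCircuit {V : Type*} [Fintype V] [DecidableEq V] (G : SimpleGraph V) [DecidableRel G.Adj]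
    (g : G.edgeSet → ℝ) : Prop :=
  g ≠ 0 ∧ ∀ y : G.edgeSet → ℝ, y ≠ 0 → ¬ Bsupp G y ⊂ Bsupp G g

/-- The unit vector supported on the edge `e`. -/
def unitVec {V : Type*} [DecidableEq V] (G : SimpleGraph V) (e : G.edgeSet) :
    G.edgeSet → ℝ :=
  fun f => if f = e then 1 else 0

/-- The spanning subgraph of `G` with edge set `R`. -/
def edgeSub {V : Type*} (G : SimpleGraph V) (R : Set G.edgeSet) : SimpleGraph V where
  Adj u v := u ≠ v ∧ ∃ e ∈ R, (e : Sym2 V) = s(u, v)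
  symm := by
    constructor
    rintro u v ⟨huv, e, heR, he⟩
    exact ⟨huv.symm, e, heR, by rw [he, Sym2.eq_swap]⟩
  loopless := by constructor; rintro v ⟨hv, _⟩; exact hv rfl

/-! A coordinate `f` where `g - z` vanishes has `z f = g f ≠ 0`. Because `z` has uniform sign,
every rank row whose set contains both ends of `f` is nonzero on `z`; so a row balanced for `g`
would be nonzero on `g - z`, contradicting `Bsupp (g - z) ⊆ Bsupp g`. Dropping `f` therefore only
changes rows that are already in `Bsupp g`, and it kills the row of the two ends of `f`, which
(the graph being simple) reads off exactly the entry at `f`. -/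

theorem Sym2.eq_of_forall_mem_of_not_isDiag {α : Type*} {e e' : Sym2 α} (he : ¬ e.IsDiag)
    (h : ∀ v ∈ e, v ∈ e') : e = e' := by
  induction e using Sym2.ind with
  | _ u v =>
    induction e' using Sym2.ind with
    | _ a b =>
      simp only [Sym2.mem_iff, forall_eq_or_imp, forall_eq, Sym2.mk_isDiag_iff] at he h
      grind

section RankRows

variable {V : Type*} [Fintype V] [DecidableEq V] {G : SimpleGraph V} [DecidableRel G.Adj]

theorem rowSum_eq_sum_filter (g : G.edgeSet → ℝ) (U : Finset V) :
    rowSum G g U =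
      ∑ e ∈ Finset.univ.filter (fun e : G.edgeSet => ∀ v ∈ (e : Sym2 V), v ∈ U), g e :=
  (Finset.sum_filter _ _).symm

theorem rowSum_sub (g z : G.edgeSet → ℝ) (U : Finset V) :
    rowSum G (g - z) U = rowSum G g U - rowSum G z U := by
  simp only [rowSum_eq_sum_filter, Pi.sub_apply, Finset.sum_sub_distrib]

theorem rowSum_neg (z : G.edgeSet → ℝ) (U : Finset V) :
    rowSum G (-z) U = -rowSum G z U := by
  simp only [rowSum_eq_sum_filter, Pi.neg_apply, Finset.sum_neg_distrib]

theorem rowSum_pos_of_nonneg {z : G.edgeSet → ℝ} (hz : ∀ e, 0 ≤ z e) {f : G.edgeSet}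
    (hf : z f ≠ 0) {U : Finset V} (hU : ∀ v ∈ (f : Sym2 V), v ∈ U) : 0 < rowSum G z U := by
  rw [rowSum_eq_sum_filter]
  exact Finset.sum_pos' (fun e _ => hz e)
    ⟨f, Finset.mem_filter.2 ⟨Finset.mem_univ f, hU⟩, (hz f).lt_of_ne' hf⟩

theorem rowSum_ne_zero_of_uniform_sign {z : G.edgeSet → ℝ}
    (huni : (∀ e, 0 ≤ z e) ∨ (∀ e, z e ≤ 0)) {f : G.edgeSet} (hf : z f ≠ 0) {U : Finset V}
    (hU : ∀ v ∈ (f : Sym2 V), v ∈ U) : rowSum G z U ≠ 0 := by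
  rcases huni with hpos | hneg
  · exact (rowSum_pos_of_nonneg hpos hf hU).ne'
  · have hpos := rowSum_pos_of_nonneg (z := -z) (fun e => neg_nonneg.2 (hneg e))
      (neg_ne_zero.2 hf) hU
    rw [rowSum_neg] at hpos
    exact (neg_pos.1 hpos).ne

theorem rowSum_toFinset (w : G.edgeSet → ℝ) (f : G.edgeSet) :
    rowSum G w (f : Sym2 V).toFinset = w f := by
  have hrow : Finset.univ.filter
      (fun e : G.edgeSet => ∀ v ∈ (e : Sym2 V), v ∈ (f : Sym2 V).toFinset) = {f} := by
    ext e
    simp only [Finset.mem_filter, Finset.mem_univ, true_and, Sym2.mem_toFinset,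
      Finset.mem_singleton]
    exact ⟨fun h => Subtype.ext (Sym2.eq_of_forall_mem_of_not_isDiag
      (G.not_isDiag_of_mem_edgeSet e.2) h), fun h => h ▸ fun _ => id⟩
  rw [rowSum_eq_sum_filter, hrow, Finset.sum_singleton]

theorem rowSum_drop_of_not_forall_mem (g : G.edgeSet → ℝ) {f : G.edgeSet} {U : Finset V}
    (hU : ¬ ∀ v ∈ (f : Sym2 V), v ∈ U) :
    rowSum G (fun e => if e = f then 0 else g e) U = rowSum G g U := by
  refine Finset.sum_congr rfl fun e _ => ?_
  by_cases he : e = f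
  · subst he
    simp only [if_neg hU]
  · simp only [if_neg he]

theorem rowSum_ne_zero_of_Bsupp_sub_subset {g z : G.edgeSet → ℝ}
    (huni : (∀ e, 0 ≤ z e) ∨ (∀ e, z e ≤ 0)) (hBz : Bsupp G (g - z) ⊆ Bsupp G g)
    {f : G.edgeSet} (hf : z f ≠ 0) (U : Finset V) (hU : ∀ v ∈ (f : Sym2 V), v ∈ U) :
    rowSum G g U ≠ 0 := by
  intro hbal
  have hzU := rowSum_ne_zero_of_uniform_sign huni hf hU
  have hUne : U.Nonempty := ⟨_, hU _ (Sym2.out_fst_mem _)⟩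
  have hmem : U ∈ Bsupp G (g - z) := ⟨hUne, by rwa [rowSum_sub, hbal, zero_sub, neg_ne_zero]⟩
  exact (hBz hmem).2 hbal

theorem Bsupp_drop_ssubset {g : G.edgeSet → ℝ} {f : G.edgeSet} (hf : g f ≠ 0)
    (hunbal : ∀ U : Finset V, (∀ v ∈ (f : Sym2 V), v ∈ U) → rowSum G g U ≠ 0) :
    Bsupp G (fun e => if e = f then 0 else g e) ⊂ Bsupp G g := by
  refine ⟨fun U ⟨hUne, hU⟩ => ⟨hUne, ?_⟩, fun hsub => ?_⟩
  · by_cases hfU : ∀ v ∈ (f : Sym2 V), v ∈ U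
    · exact hunbal U hfU
    · rwa [rowSum_drop_of_not_forall_mem g hfU] at hU
  · have hends : (f : Sym2 V).toFinset ∈ Bsupp G g :=
      ⟨⟨_, Sym2.mem_toFinset.2 (Sym2.out_fst_mem _)⟩, by rwa [rowSum_toFinset]⟩
    have hdropped := (hsub hends).2
    simp [rowSum_toFinset] at hdropped

end RankRows

theorem stmt11_general {V : Type*} [Fintype V] [DecidableEq V] (G : SimpleGraph V)
    [DecidableRel G.Adj] (g z : G.edgeSet → ℝ)
    (huni : (∀ e, 0 ≤ z e) ∨ (∀ e, z e ≤ 0))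
    (hy1 : {e | (g - z) e ≠ 0} ⊂ {e | g e ≠ 0})
    (hy2 : Bsupp G (g - z) ⊂ Bsupp G g) :
    ∃ f : G.edgeSet, g f ≠ 0 ∧
      (∀ U : Finset V, (∀ v ∈ (f : Sym2 V), v ∈ U) → rowSum G g U ≠ 0) ∧
      Bsupp G (fun e => if e = f then 0 else g e) ⊂ Bsupp G g := by
  obtain ⟨f, hgf : g f ≠ 0, hyf : ¬ g f - z f ≠ 0⟩ := Set.exists_of_ssubset hy1
  have hzf : z f ≠ 0 := (sub_eq_zero.1 (not_not.1 hyf)) ▸ hgf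
  have hunbal := rowSum_ne_zero_of_Bsupp_sub_subset huni hy2.subset hzf
  exact ⟨f, hgf, hunbal, Bsupp_drop_ssubset hgf hunbal⟩

/-- If a nonzero uniform-sign vector `z` supported inside `supp(g)` can be dropped from
`g` (creating a new zero entry) so that the result has strictly reduced support w.r.t.
the rank matrix `B`, then some single edge `f` of `supp(g)` lies in no balanced set, and
dropping `f` alone reduces the support. -/
theorem stmt11 {V : Type*} [Fintype V] [DecidableEq V] (G : SimpleGraph V)
    [DecidableRel G.Adj] (g z : G.edgeSet → ℝ) (hz : z ≠ 0)
    (huni : (∀ e, 0 ≤ z e) ∨ (∀ e, z e ≤ 0))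
    (hsupp : ∀ e, z e ≠ 0 → g e ≠ 0)
    (hy1 : {e | (g - z) e ≠ 0} ⊂ {e | g e ≠ 0})
    (hy2 : Bsupp G (g - z) ⊂ Bsupp G g) :
    ∃ f : G.edgeSet, g f ≠ 0 ∧
      (∀ U : Finset V, (∀ v ∈ (f : Sym2 V), v ∈ U) → rowSum G g U ≠ 0) ∧
      Bsupp G (fun e => if e = f then 0 else g e) ⊂ Bsupp G g :=
  stmt11_general G g z huni hy1 hy2
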